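/- arXiv:2603.05565 — 3 statements merged into one kernel-verified Lean document; each statement's English description precedes it below -/
import Mathlib

section
/- Let h be a real-valued random variable on a probability space with mean μ_h > 0 and variance σ_h² > 0, let φ > 0, α > 0 and β ≥ 0, and for A ≥ 0 define the partially multiplicative task output y_A = h·φ·(1 + β·A) + α·A. Then E[y_A] = μ_h·φ·(1 + β·A) + α·A, the standard deviation of y_A is σ_h·φ·(1 + β·A), the coefficient of variation is CV(A) = σ_h·φ·(1 + β·A)/(μ_h·φ·(1 + β·A) + α·A), and CV is differentiable with CV′(A) = −σ_h·φ·α/(μ_h·φ·(1 + β·A) + α·A)² < 0; hence CV is strictly decreasing on [0,∞) for every β ≥ 0, so skill homogenization survives partial multiplicative complementarity whenever the additive AI component α is positive. (Proposition 2, homogenization under the general specification.) -/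
open MeasureTheory ProbabilityTheory Set

/-! The output `y_A` is an affine image `c·h + d` of `h` with slope `c = φ(1 + βA) > 0`, so its mean
is `c·μ_h + d` and its standard deviation `c·σ_h`. The coefficient of variation is a ratio of affine
functions of `A`, whose derivative has numerator `σ_h φ β (μ_h φ + (μ_h φ β + α) A) −
(μ_h φ β + α) σ_h φ (1 + βA) = −σ_h φ α`: the multiplicative parts of numerator and denominator
cancel, leaving only the additive AI term. -/

lemma integral_mul_const_add_const {Ω : Type*} [MeasurableSpace Ω] {μ : Measure Ω}
    [IsProbabilityMeasure μ] {X : Ω → ℝ} (hX : Integrable X μ) (c d : ℝ) :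
    ∫ ω, (X ω * c + d) ∂μ = (∫ ω, X ω ∂μ) * c + d := by
  rw [integral_add (hX.mul_const c) (integrable_const d), integral_mul_const, integral_const,
    probReal_univ, one_smul]

lemma variance_mul_const_add_const {Ω : Type*} [MeasurableSpace Ω] {μ : Measure Ω}
    [IsProbabilityMeasure μ] {X : Ω → ℝ} (hX : AEStronglyMeasurable X μ) (c d : ℝ) :
    variance (fun ω => X ω * c + d) μ = variance X μ * c ^ 2 := by
  rw [variance_add_const (hX.mul_const c), variance_mul_const]

section CoefficientOfVariation

variable {σ μ k α β A : ℝ}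

lemma hasDerivAt_cv (hD : μ * k * (1 + β * A) + α * A ≠ 0) :
    HasDerivAt (fun A : ℝ => σ * k * (1 + β * A) / (μ * k * (1 + β * A) + α * A))
      (-(σ * k * α) / (μ * k * (1 + β * A) + α * A) ^ 2) A := by
  have hL : HasDerivAt (fun A : ℝ => 1 + β * A) β A := by
    simpa using ((hasDerivAt_id A).const_mul β).const_add 1
  have hD' : HasDerivAt (fun A : ℝ => μ * k * (1 + β * A) + α * A) (μ * k * β + α * 1) A :=
    (hL.const_mul (μ * k)).add ((hasDerivAt_id A).const_mul α)
  refine ((hL.const_mul (σ * k)).div hD' hD).congr_deriv ?_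
  rw [div_left_inj' (pow_ne_zero 2 hD)]
  ring

lemma cv_denom_pos (hμ : 0 < μ) (hk : 0 < k) (hα : 0 < α) (hβ : 0 ≤ β) (hA : 0 ≤ A) :
    0 < μ * k * (1 + β * A) + α * A := by
  positivity

lemma cv_deriv_neg (hσ : 0 < σ) (hμ : 0 < μ) (hk : 0 < k) (hα : 0 < α) (hβ : 0 ≤ β)
    (hA : 0 ≤ A) : -(σ * k * α) / (μ * k * (1 + β * A) + α * A) ^ 2 < 0 :=
  div_neg_of_neg_of_pos (neg_neg_of_pos (by positivity))
    (pow_pos (cv_denom_pos hμ hk hα hβ hA) 2)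

lemma strictAntiOn_cv (hσ : 0 < σ) (hμ : 0 < μ) (hk : 0 < k) (hα : 0 < α) (hβ : 0 ≤ β) :
    StrictAntiOn (fun A : ℝ => σ * k * (1 + β * A) / (μ * k * (1 + β * A) + α * A)) (Ici 0) := by
  have hderiv (A : ℝ) (hA : 0 ≤ A) := hasDerivAt_cv (σ := σ) (cv_denom_pos hμ hk hα hβ hA).ne'
  refine strictAntiOn_of_deriv_neg (convex_Ici 0)
    (fun A hA => (hderiv A hA).continuousAt.continuousWithinAt) fun A hA => ?_
  rw [interior_Ici] at hA
  rw [(hderiv A hA.le).deriv]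
  exact cv_deriv_neg hσ hμ hk hα hβ hA.le

end CoefficientOfVariation

/-- Proposition 2 (homogenization under the partially multiplicative specification):
for `y_A = h·φ·(1+β·A) + α·A`, the mean is `μ_h·φ·(1+β·A) + α·A`, the standard
deviation is `σ_h·φ·(1+β·A)`, the coefficient of variation
`CV(A) = σ_h·φ·(1+β·A)/(μ_h·φ·(1+β·A) + α·A)` has derivative
`−σ_h·φ·α/(μ_h·φ·(1+β·A) + α·A)² < 0`, and `CV` is strictly decreasing on `[0,∞)`. -/
theorem homogenization_general
    {Ω : Type*} [MeasureSpace Ω] [IsProbabilityMeasure (ℙ : Measure Ω)]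
    (h : Ω → ℝ) (hmem : MemLp h 2)
    (μh σh φ α β : ℝ)
    (hμ : μh = ∫ ω, h ω) (hσ : σh ^ 2 = variance h ℙ)
    (hσpos : 0 < σh) (hμpos : 0 < μh) (hφ : 0 < φ) (hα : 0 < α) (hβ : 0 ≤ β) :
    (∀ A : ℝ, 0 ≤ A →
      (∫ ω, (h ω * φ * (1 + β * A) + α * A)) = μh * φ * (1 + β * A) + α * A ∧
      Real.sqrt (variance (fun ω => h ω * φ * (1 + β * A) + α * A) ℙ) =
        σh * φ * (1 + β * A) ∧
      HasDerivAt (fun A : ℝ => σh * φ * (1 + β * A) / (μh * φ * (1 + β * A) + α * A))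
        (-(σh * φ * α) / (μh * φ * (1 + β * A) + α * A) ^ 2) A ∧
      -(σh * φ * α) / (μh * φ * (1 + β * A) + α * A) ^ 2 < 0) ∧
    StrictAntiOn (fun A : ℝ => σh * φ * (1 + β * A) / (μh * φ * (1 + β * A) + α * A))
      (Ici 0) := by
  refine ⟨fun A hA => ⟨?_, ?_, hasDerivAt_cv (cv_denom_pos hμpos hφ hα hβ hA).ne',
    cv_deriv_neg hσpos hμpos hφ hα hβ hA⟩, strictAntiOn_cv hσpos hμpos hφ hα hβ⟩
  · simp_rw [mul_assoc (h _)]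
    rw [integral_mul_const_add_const (hmem.integrable one_le_two), ← hμ, mul_assoc]
  · simp_rw [mul_assoc (h _)]
    rw [variance_mul_const_add_const hmem.aestronglyMeasurable, ← hσ, ← mul_pow, ← mul_assoc,
      Real.sqrt_sq (by positivity)]
end

section
/- Let n ≥ 2, σ > 0 with σ ≠ 1, and fix i ≠ j and positive values of all task outputs other than y_j. Then the marginal product of task i, p_i(y) = ∂Y/∂y_i = (Y(y)/y_i)^{1/σ}, is a strictly increasing function of y_j on (0,∞). Hence when AI raises output on augmentable tasks, the competitive price of every non-augmented task strictly rises. (Proposition 3(c), rising prices of tasks outside the AI-augmentable set.) -/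
open Set

/-- The CES aggregator `Y(y) = (Σ_i y_i^{(σ−1)/σ})^{σ/(σ−1)}`. -/
noncomputable def cesAggregate (n : ℕ) (σ : ℝ) (y : Fin n → ℝ) : ℝ :=
  (∑ i, y i ^ ((σ - 1) / σ)) ^ (σ / (σ - 1))

/-!
Write `ρ = (σ - 1)/σ`, so that `Y = (Σ_k y_k^ρ)^{1/ρ}`. As a function of `y_j` alone this is
`(y_j^ρ + C)^{1/ρ}` with `C ≥ 0`, a composite of two maps that are both increasing (`ρ > 0`)
or both decreasing (`ρ < 0`), hence strictly increasing. The price of task `i` is `Y / y_i`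
raised to the positive power `1/σ`, so it inherits the monotonicity.
-/

theorem Real.strictMonoOn_rpow_add_const_rpow_inv {c ρ : ℝ} (hc : 0 ≤ c) (hρ : ρ ≠ 0) :
    StrictMonoOn (fun s : ℝ => (s ^ ρ + c) ^ ρ⁻¹) (Ioi 0) := by
  rcases hρ.lt_or_gt with hneg | hpos
  · have hinner : StrictAntiOn (fun s : ℝ => s ^ ρ + c) (Ioi 0) := fun a ha b hb hab =>
      add_lt_add_left (Real.strictAntiOn_rpow_Ioi_of_exponent_neg hneg ha hb hab) c
    exact (Real.strictAntiOn_rpow_Ioi_of_exponent_neg (inv_lt_zero.2 hneg)).comp hinner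
      fun s hs => add_pos_of_pos_of_nonneg (Real.rpow_pos_of_pos hs ρ) hc
  · have hinner : StrictMonoOn (fun s : ℝ => s ^ ρ + c) (Ioi 0) := fun a ha b hb hab =>
      add_lt_add_left (Real.strictMonoOn_rpow_Ici_of_exponent_pos hpos
        (Ioi_subset_Ici_self ha) (Ioi_subset_Ici_self hb) hab) c
    exact (Real.strictMonoOn_rpow_Ici_of_exponent_pos (inv_pos.2 hpos)).comp hinner
      fun s hs => add_nonneg (Real.rpow_nonneg (le_of_lt hs) ρ) hc

theorem cesAggregate_update {n : ℕ} (σ : ℝ) (y : Fin n → ℝ) (j : Fin n) (t : ℝ) :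
    cesAggregate n σ (Function.update y j t) =
      (t ^ ((σ - 1) / σ) + ∑ k ∈ Finset.univ.erase j, y k ^ ((σ - 1) / σ))
        ^ ((σ - 1) / σ)⁻¹ := by
  rw [cesAggregate, inv_div, ← Finset.add_sum_erase _
    (fun k => Function.update y j t k ^ ((σ - 1) / σ)) (Finset.mem_univ j), Function.update_self]
  congr 2
  exact Finset.sum_congr rfl fun k hk => by rw [Function.update_of_ne (Finset.ne_of_mem_erase hk)]

theorem cesAggregate_nonneg {n : ℕ} (σ : ℝ) {y : Fin n → ℝ} (hy : 0 ≤ y) :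
    0 ≤ cesAggregate n σ y :=
  Real.rpow_nonneg (Finset.sum_nonneg fun k _ => Real.rpow_nonneg (hy k) _) _

theorem cesAggregate_update_strictMonoOn {n : ℕ} {σ : ℝ} (hσ : 0 < σ) (hσ1 : σ ≠ 1)
    {y : Fin n → ℝ} {j : Fin n} (hy : ∀ k ≠ j, 0 ≤ y k) :
    StrictMonoOn (fun t => cesAggregate n σ (Function.update y j t)) (Ioi 0) := by
  simp only [cesAggregate_update]
  exact Real.strictMonoOn_rpow_add_const_rpow_inv
    (Finset.sum_nonneg fun k hk => Real.rpow_nonneg (hy k (Finset.ne_of_mem_erase hk)) _)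
    (div_ne_zero (sub_ne_zero.2 hσ1) hσ.ne')

theorem cross_task_price_rises_general
    (n : ℕ) (σ : ℝ) (hσ : 0 < σ) (hσ1 : σ ≠ 1)
    (i j : Fin n) (hij : i ≠ j)
    (y : Fin n → ℝ) (hy : ∀ k, k ≠ j → 0 < y k) :
    StrictMonoOn
      (fun t : ℝ => (cesAggregate n σ (Function.update y j t) / y i) ^ (1 / σ))
      (Ioi 0) := by
  have hyi : 0 < y i := hy i hij
  have hprice : StrictMonoOn (fun x : ℝ => (x / y i) ^ (1 / σ)) (Ici 0) :=
    (Real.strictMonoOn_rpow_Ici_of_exponent_pos (by positivity)).comp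
      (fun _ _ _ _ hab => div_lt_div_of_pos_right hab hyi) fun _ hx => div_nonneg hx hyi.le
  refine hprice.comp (cesAggregate_update_strictMonoOn hσ hσ1 fun k hk => (hy k hk).le)
    fun t ht => cesAggregate_nonneg σ ?_
  exact le_update_iff.2 ⟨le_of_lt ht, fun k hk => (hy k hk).le⟩

/-- Proposition 3(c) (rising prices of non-augmented tasks): for `σ > 0`, `σ ≠ 1`
and `i ≠ j`, the marginal product of task `i`, `p_i(y) = (Y(y)/y_i)^{1/σ}`, is a
strictly increasing function of `y_j` on `(0,∞)`. -/
theorem cross_task_price_rises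
    (n : ℕ) (hn : 2 ≤ n) (σ : ℝ) (hσ : 0 < σ) (hσ1 : σ ≠ 1)
    (i j : Fin n) (hij : i ≠ j)
    (y : Fin n → ℝ) (hy : ∀ k, k ≠ j → 0 < y k) :
    StrictMonoOn
      (fun t : ℝ => (cesAggregate n σ (Function.update y j t) / y i) ^ (1 / σ))
      (Ioi 0) :=
  cross_task_price_rises_general n σ hσ hσ1 i j hij y hy
end

section
/- Let n ≥ 2, σ > 1, and fix positive values of all task outputs other than y_j. Then the own marginal product of task j, p_j(y) = ∂Y/∂y_j = (Y(y)/y_j)^{1/σ}, is a strictly decreasing function of y_j on (0,∞). Hence when σ > 1 and AI raises output y_j on an augmentable task, the competitive price of that task strictly falls, reducing the human-capital-weighted task price index on AI-augmented tasks. (Proposition 3(a), declining prices of AI-augmented tasks when tasks are gross substitutes.) -/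
/-!
Write `r = (σ - 1)/σ` and `S = Σ_{i ≠ j} y_i^r`. Since `Y = (t^r + S)^{1/r}` and `1/σ = r/(σ - 1)`,
the own price is `(Y/t)^{1/σ} = (1 + S/t^r)^{1/(σ-1)}`. For `σ > 1` both `r` and `1/(σ - 1)` are
positive, and `S > 0` because some other task has positive output, so this is strictly decreasing in `t`.
-/

open Set

open Finset

lemma sum_rpow_update {ι : Type*} [Fintype ι] [DecidableEq ι] (y : ι → ℝ) (j : ι) (t r : ℝ) :
    ∑ i, Function.update y j t i ^ r = t ^ r + ∑ i ∈ univ.erase j, y i ^ r := by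
  rw [funext fun i => Function.apply_update (fun _ x => x ^ r) y j t i,
    sum_update_of_mem (mem_univ j), sdiff_singleton_eq_erase]

lemma ces_own_price_eq {σ t S : ℝ} (hσ₀ : σ ≠ 0) (hσ₁ : σ ≠ 1) (ht : 0 < t) (hS : 0 ≤ S) :
    ((t ^ ((σ - 1) / σ) + S) ^ (σ / (σ - 1)) / t) ^ (1 / σ)
      = (1 + S / t ^ ((σ - 1) / σ)) ^ (1 / (σ - 1)) := by
  have htr : 0 < t ^ ((σ - 1) / σ) := Real.rpow_pos_of_pos ht _
  have hsum : 0 < t ^ ((σ - 1) / σ) + S := by positivity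
  rw [one_add_div htr.ne', Real.div_rpow hsum.le htr.le,
    Real.div_rpow (Real.rpow_nonneg hsum.le _) ht.le, ← Real.rpow_mul hsum.le,
    ← Real.rpow_mul ht.le]
  congr 2 <;> field_simp

lemma strictAntiOn_one_add_div_rpow {S r e : ℝ} (hS : 0 < S) (hr : 0 < r) (he : 0 < e) :
    StrictAntiOn (fun t : ℝ => (1 + S / t ^ r) ^ e) (Ioi 0) := by
  intro a ha b hb hab
  have har : 0 < a ^ r := Real.rpow_pos_of_pos ha r
  have hdiv : S / b ^ r < S / a ^ r :=
    div_lt_div_of_pos_left hS har (Real.rpow_lt_rpow (le_of_lt ha) hab hr)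
  exact Real.rpow_lt_rpow (add_pos one_pos (div_pos hS (Real.rpow_pos_of_pos hb r))).le
    (by linarith) he

/-- Proposition 3(a) (declining prices of AI-augmented tasks under gross
substitutes): for `σ > 1`, the own marginal product of task `j`,
`p_j(y) = (Y(y)/y_j)^{1/σ}`, is a strictly decreasing function of `y_j` on
`(0,∞)`. -/
theorem own_task_price_falls
    (n : ℕ) (hn : 2 ≤ n) (σ : ℝ) (hσ : 1 < σ)
    (j : Fin n) (y : Fin n → ℝ) (hy : ∀ k, k ≠ j → 0 < y k) :
    StrictAntiOn
      (fun t : ℝ => (cesAggregate n σ (Function.update y j t) / t) ^ (1 / σ))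
      (Ioi 0) := by
  have : Nontrivial (Fin n) := Fin.nontrivial_iff_two_le.mpr hn
  have hσ₀ : 0 < σ := one_pos.trans hσ
  have hS : 0 < ∑ i ∈ univ.erase j, y i ^ ((σ - 1) / σ) := by
    obtain ⟨k, hk⟩ := exists_ne j
    refine sum_pos (fun i hi => Real.rpow_pos_of_pos (hy i (ne_of_mem_erase hi)) _) ⟨k, ?_⟩
    exact mem_erase.2 ⟨hk, mem_univ k⟩
  refine (strictAntiOn_one_add_div_rpow hS (div_pos (sub_pos.2 hσ) hσ₀)
    (one_div_pos.2 (sub_pos.2 hσ))).congr fun t ht => ?_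
  rw [cesAggregate, sum_rpow_update, ces_own_price_eq hσ₀.ne' hσ.ne' ht hS.le]
end
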